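/- Let n ≥ 1 and let x, v₁, v₂ ∈ ℝⁿ with ‖v₁‖ = ‖v₂‖ = 1. Set b₁ = ⟪x, v₁⟫, b₂ = ⟪x, v₂⟫ and α = ⟪v₁, v₂⟫, and assume |α| < 1, b₁ - α·b₂ ≠ 0 and |b₁| ≥ |b₂|. Define s = (b₂ - α·b₁)/(b₁ - α·b₂). Then |⟪x, v₁ + s·v₂⟫| / ‖v₁ + s·v₂‖ ≥ max(|b₁|, |b₂|). -/

import Mathlib

open scoped RealInnerProductSpace

/-!
The ratio `|⟪x, w⟫| / ‖w‖` is invariant under rescaling `w`, so clearing the denominator of `s`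
we may replace `v₁ + s • v₂` by `w = (b₁ - α b₂) • v₁ + (b₂ - α b₁) • v₂`. Writing
`Q = b₁² - 2 α b₁ b₂ + b₂²`, one computes `⟪x, w⟫ = Q` and `‖w‖² = (1 - α²) Q`, so the squared
ratio is `Q / (1 - α²)`; and `Q - (1 - α²) b₁² = (α b₁ - b₂)² ≥ 0`, symmetrically for `b₂`.
-/

section InnerProductSpace

variable {E : Type*} [NormedAddCommGroup E] [InnerProductSpace ℝ E]

theorem abs_inner_smul_right_div_norm_smul (x w : E) {c : ℝ} (hc : c ≠ 0) :
    |⟪x, c • w⟫| / ‖c • w‖ = |⟪x, w⟫| / ‖w‖ := by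
  rw [real_inner_smul_right, norm_smul, abs_mul, Real.norm_eq_abs,
    mul_div_mul_left _ _ (abs_ne_zero.mpr hc)]

theorem le_abs_inner_div_norm_iff {x w : E} (hw : 0 < ‖w‖) {a : ℝ} (ha : 0 ≤ a) :
    a ≤ |⟪x, w⟫| / ‖w‖ ↔ a ^ 2 * ‖w‖ ^ 2 ≤ ⟪x, w⟫ ^ 2 := by
  rw [le_div_iff₀ hw, ← mul_pow, ← sq_abs ⟪x, w⟫]
  exact (pow_le_pow_iff_left₀ (by positivity) (abs_nonneg _) two_ne_zero).symm

theorem norm_smul_add_smul_sq_of_norm_eq_one {v₁ v₂ : E} (hv₁ : ‖v₁‖ = 1) (hv₂ : ‖v₂‖ = 1)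
    (a c : ℝ) : ‖a • v₁ + c • v₂‖ ^ 2 = a ^ 2 + 2 * a * c * ⟪v₁, v₂⟫ + c ^ 2 := by
  rw [norm_add_sq_real, norm_smul, norm_smul, real_inner_smul_left, real_inner_smul_right,
    hv₁, hv₂, Real.norm_eq_abs, Real.norm_eq_abs, mul_pow, mul_pow, sq_abs, sq_abs]
  ring

end InnerProductSpace

theorem sq_mul_one_sub_sq_le (b₁ b₂ α : ℝ) :
    b₁ ^ 2 * (1 - α ^ 2) ≤ b₁ ^ 2 - 2 * α * b₁ * b₂ + b₂ ^ 2 := by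
  nlinarith [sq_nonneg (α * b₁ - b₂)]

theorem sq_sub_two_mul_mul_add_sq_pos {b₁ b₂ α : ℝ} (hα : 0 ≤ 1 - α ^ 2)
    (h : b₁ - α * b₂ ≠ 0) : 0 < b₁ ^ 2 - 2 * α * b₁ * b₂ + b₂ ^ 2 := by
  have hsplit : b₁ ^ 2 - 2 * α * b₁ * b₂ + b₂ ^ 2 = (b₁ - α * b₂) ^ 2 + (1 - α ^ 2) * b₂ ^ 2 := by
    ring
  rw [hsplit]
  exact add_pos_of_pos_of_nonneg (sq_pos_of_ne_zero h) (by positivity)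

theorem sap_optimal_combination_ge_max {n : ℕ}
    (x v₁ v₂ : EuclideanSpace ℝ (Fin n))
    (hv₁ : ‖v₁‖ = 1) (hv₂ : ‖v₂‖ = 1)
    (b₁ b₂ α : ℝ) (hb₁ : b₁ = ⟪x, v₁⟫) (hb₂ : b₂ = ⟪x, v₂⟫) (hα : α = ⟪v₁, v₂⟫)
    (hαlt : |α| < 1) (hden : b₁ - α * b₂ ≠ 0)
    (s : ℝ) (hs : s = (b₂ - α * b₁) / (b₁ - α * b₂)) :
    |⟪x, v₁ + s • v₂⟫| / ‖v₁ + s • v₂‖ ≥ max |b₁| |b₂| := by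
  set Q := b₁ ^ 2 - 2 * α * b₁ * b₂ + b₂ ^ 2
  set w := (b₁ - α * b₂) • v₁ + (b₂ - α * b₁) • v₂
  have hrescale : v₁ + s • v₂ = (b₁ - α * b₂)⁻¹ • w := by
    rw [smul_add, smul_smul, smul_smul, inv_mul_cancel₀ hden, one_smul, hs, div_eq_inv_mul]
  have hinner : ⟪x, w⟫ = Q := by
    rw [inner_add_right, real_inner_smul_right, real_inner_smul_right, ← hb₁, ← hb₂]
    ring
  have hnorm : ‖w‖ ^ 2 = (1 - α ^ 2) * Q := by
    rw [norm_smul_add_smul_sq_of_norm_eq_one hv₁ hv₂, ← hα]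
    ring
  have hα2 : 0 < 1 - α ^ 2 := sub_pos.mpr ((sq_lt_one_iff_abs_lt_one α).mpr hαlt)
  have hQ : 0 < Q := sq_sub_two_mul_mul_add_sq_pos hα2.le hden
  have hw : 0 < ‖w‖ := (norm_nonneg w).lt_of_ne' <| sq_pos_iff.mp <| by
    rw [hnorm]
    exact mul_pos hα2 hQ
  have hbound (b : ℝ) (hb : b ^ 2 * (1 - α ^ 2) ≤ Q) : |b| ≤ |⟪x, w⟫| / ‖w‖ := by
    rw [le_abs_inner_div_norm_iff hw (abs_nonneg b), sq_abs, hnorm, hinner]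
    nlinarith
  rw [hrescale, abs_inner_smul_right_div_norm_smul x w (inv_ne_zero hden)]
  exact max_le (hbound b₁ (sq_mul_one_sub_sq_le b₁ b₂ α))
    (hbound b₂ (by linarith [sq_mul_one_sub_sq_le b₂ b₁ α]))
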